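/- arXiv:2103.01447 — 2 statements merged into one kernel-verified Lean document; each statement's English description precedes it below -/
import Mathlib

section
/- Fix x, x' ∈ ℝ^d, v' ∈ ℝ^d, y_1, …, y_n ∈ ℝ^d, λ ∈ ℝ and 1 ≤ b ≤ n. Then E_I[‖v(I) − ∇f(x)‖²] ≤ (1 − λ)² ‖v' − ∇f(x')‖² + (2L²/b) ‖x − x'‖² + (2λ²/b) · (1/n) ∑_{j=1}^n ‖∇f_j(x') − y_j‖², where v(I) is the ZeroSARAH gradient estimator and E_I is the expectation over a uniformly random size-b minibatch. -/
noncomputable section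

/-- The average function `f = (1/n) ∑ᵢ fᵢ`. -/
noncomputable def avgF {d n : ℕ} (f : Fin n → EuclideanSpace ℝ (Fin d) → ℝ) :
    EuclideanSpace ℝ (Fin d) → ℝ :=
  fun z => (n : ℝ)⁻¹ * ∑ i, f i z

/-- Expectation (average) of a real-valued function of a uniformly random
size-`b` subset of `{1,…,n}`. -/
noncomputable def expSub (n b : ℕ) (g : Finset (Fin n) → ℝ) : ℝ :=
  (∑ I ∈ Finset.powersetCard b (Finset.univ : Finset (Fin n)), g I) /
    ((Finset.powersetCard b (Finset.univ : Finset (Fin n))).card : ℝ)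

/-- The ZeroSARAH gradient estimator
`v(I) = (1/b)∑_{i∈I}(∇fᵢ(x) − ∇fᵢ(x')) + (1−λ)v' + λ[(1/b)∑_{i∈I}(∇fᵢ(x') − yᵢ) + (1/n)∑ⱼ yⱼ]`. -/
noncomputable def zsEst {d n : ℕ} (f : Fin n → EuclideanSpace ℝ (Fin d) → ℝ)
    (x x' v' : EuclideanSpace ℝ (Fin d)) (y : Fin n → EuclideanSpace ℝ (Fin d))
    (lam : ℝ) (b : ℕ) (I : Finset (Fin n)) : EuclideanSpace ℝ (Fin d) :=
  (b : ℝ)⁻¹ • ∑ i ∈ I, (gradient (f i) x - gradient (f i) x')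
    + (1 - lam) • v'
    + lam • ((b : ℝ)⁻¹ • ∑ i ∈ I, (gradient (f i) x' - y i)
        + (n : ℝ)⁻¹ • ∑ j, y j)

/-!
Subtracting `∇f(x)` from the estimator leaves `b⁻¹ ∑_{i ∈ I} (wᵢ - w̄) + (1 - λ)(v' - ∇f(x'))`,
where `wᵢ = ∇fᵢ(x) - ∇fᵢ(x') + λ(∇fᵢ(x') - yᵢ)` and `w̄` is their mean. The first summand has
mean zero over the minibatch, so the cross term drops out of the expected square. For centred
vectors `uᵢ`, counting the `b`-subsets that contain a given index or a given pair of distinct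
indices gives
  `∑_I ‖∑_{i ∈ I} uᵢ‖² = (C(n-1, b-1) - C(n-2, b-2)) ∑ ‖uᵢ‖² ≤ (b / n) C(n, b) ∑ ‖uᵢ‖²`
(with `C(n-2, b-2)` read as `0` when `b = 1`): sampling without replacement is at least as good
as with replacement. Centring does not increase the sum of squares, and smoothness gives
`‖wᵢ‖² ≤ 2L²‖x - x'‖² + 2λ²‖∇fᵢ(x') - yᵢ‖²`.
-/

open Finset

namespace Finset

section Mean

variable {α E : Type*} [NormedAddCommGroup E] [InnerProductSpace ℝ E]

theorem sum_sub_mean_eq_zero (s : Finset α) (w : α → E) :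
    ∑ i ∈ s, (w i - (#s : ℝ)⁻¹ • ∑ j ∈ s, w j) = 0 := by
  rcases s.eq_empty_or_nonempty with rfl | hs
  · simp
  rw [sum_sub_distrib, sum_const, ← Nat.cast_smul_eq_nsmul ℝ,
    smul_inv_smul₀ (Nat.cast_ne_zero.2 hs.card_pos.ne'), sub_self]

theorem sum_norm_sub_mean_sq_le (s : Finset α) (w : α → E) :
    ∑ i ∈ s, ‖w i - (#s : ℝ)⁻¹ • ∑ j ∈ s, w j‖ ^ 2 ≤ ∑ i ∈ s, ‖w i‖ ^ 2 := by
  rcases s.eq_empty_or_nonempty with rfl | hs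
  · simp
  set m := (#s : ℝ)⁻¹ • ∑ j ∈ s, w j
  have hsum : ∑ j ∈ s, w j = (#s : ℝ) • m := by
    rw [smul_inv_smul₀ (Nat.cast_ne_zero.2 hs.card_pos.ne')]
  calc ∑ i ∈ s, ‖w i - m‖ ^ 2
      = ∑ i ∈ s, ‖w i‖ ^ 2 - 2 * inner ℝ (∑ j ∈ s, w j) m + #s * ‖m‖ ^ 2 := by
        simp_rw [norm_sub_sq_real, sum_add_distrib, sum_sub_distrib, ← mul_sum, ← sum_inner,
          sum_const, nsmul_eq_mul]
    _ = ∑ i ∈ s, ‖w i‖ ^ 2 - #s * ‖m‖ ^ 2 := by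
        rw [hsum, real_inner_smul_left, real_inner_self_eq_norm_sq]; ring
    _ ≤ ∑ i ∈ s, ‖w i‖ ^ 2 := sub_le_self _ (by positivity)

end Mean

variable {α M : Type*} [DecidableEq α] [AddCommMonoid M]

theorem card_filter_powersetCard_superset {s T : Finset α} (hT : T ⊆ s) (b : ℕ) :
    #{I ∈ s.powersetCard b | T ⊆ I} = if #T ≤ b then (#s - #T).choose (b - #T) else 0 := by
  split_ifs with hTb
  · exact card_filter_powersetCard_subset T s b hT hTb
  · refine card_eq_zero.2 (filter_eq_empty_iff.2 fun I hI hTI => hTb ?_)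
    exact (card_le_card hTI).trans (mem_powersetCard.1 hI).2.le

theorem sum_sum_mem_eq_sum_card_smul {S : Finset (Finset α)} {s : Finset α}
    (hS : ∀ I ∈ S, I ⊆ s) (g : α → M) :
    ∑ I ∈ S, ∑ i ∈ I, g i = ∑ i ∈ s, #{I ∈ S | {i} ⊆ I} • g i := by
  rw [sum_comm' (t' := s) (s' := fun i => {I ∈ S | {i} ⊆ I})]
  · simp only [sum_const]
  · intro I i
    simp only [mem_filter, singleton_subset_iff]
    exact ⟨fun ⟨hI, hi⟩ => ⟨⟨hI, hi⟩, hS I hI hi⟩, fun ⟨⟨hI, hi⟩, _⟩ => ⟨hI, hi⟩⟩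

theorem sum_sum_sum_mem_eq_sum_sum_card_smul {S : Finset (Finset α)} {s : Finset α}
    (hS : ∀ I ∈ S, I ⊆ s) (g : α → α → M) :
    ∑ I ∈ S, ∑ i ∈ I, ∑ j ∈ I, g i j = ∑ i ∈ s, ∑ j ∈ s, #{I ∈ S | {i, j} ⊆ I} • g i j := by
  rw [sum_comm' (t' := s) (s' := fun i => {I ∈ S | i ∈ I})]
  · refine sum_congr rfl fun i _ => ?_
    rw [sum_comm' (t' := s) (s' := fun j => {I ∈ S | {i, j} ⊆ I})]
    · simp only [sum_const]
    · intro I j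
      simp only [mem_filter, insert_subset_iff, singleton_subset_iff]
      constructor
      · rintro ⟨⟨hI, hi⟩, hj⟩; exact ⟨⟨hI, hi, hj⟩, hS I hI hj⟩
      · rintro ⟨⟨hI, hi, hj⟩, _⟩; exact ⟨⟨hI, hi⟩, hj⟩
  · intro I i
    simp only [mem_filter]
    exact ⟨fun ⟨hI, hi⟩ => ⟨⟨hI, hi⟩, hS I hI hi⟩, fun ⟨⟨hI, hi⟩, _⟩ => ⟨hI, hi⟩⟩

variable {E : Type*} [NormedAddCommGroup E] [InnerProductSpace ℝ E]

theorem sum_sum_ite_mul_inner (s : Finset α) (u : α → E) (A B : ℝ) :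
    ∑ i ∈ s, ∑ j ∈ s, (if i = j then A else B) * inner ℝ (u i) (u j)
      = (A - B) * ∑ i ∈ s, ‖u i‖ ^ 2 + B * ‖∑ i ∈ s, u i‖ ^ 2 := by
  have hsplit : ∀ i j, (if i = j then A else B) * inner ℝ (u i) (u j)
      = (if i = j then (A - B) * ‖u i‖ ^ 2 else 0) + B * inner ℝ (u i) (u j) := by
    intro i j
    split_ifs with h
    · rw [h, real_inner_self_eq_norm_sq]; ring
    · ring
  have hnorm : ‖∑ i ∈ s, u i‖ ^ 2 = ∑ i ∈ s, ∑ j ∈ s, inner ℝ (u i) (u j) := by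
    rw [← real_inner_self_eq_norm_sq, sum_inner]
    simp_rw [inner_sum]
  simp_rw [hsplit, sum_add_distrib, sum_ite_eq, ← mul_sum, hnorm]
  rw [sum_ite_mem, inter_self, ← mul_sum]

theorem sum_powersetCard_norm_sq_sum_le {s : Finset α} {b : ℕ} (hb : 1 ≤ b) (u : α → E)
    (hu : ∑ i ∈ s, u i = 0) :
    ∑ I ∈ s.powersetCard b, ‖∑ i ∈ I, u i‖ ^ 2
      ≤ (#s - 1).choose (b - 1) * ∑ i ∈ s, ‖u i‖ ^ 2 := by
  set A : ℝ := Nat.cast ((#s - 1).choose (b - 1))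
  set B : ℝ := if 2 ≤ b then Nat.cast ((#s - 2).choose (b - 2)) else 0
  have hcount : ∀ i ∈ s, ∀ j ∈ s,
      (#{I ∈ s.powersetCard b | {i, j} ⊆ I} : ℝ) = if i = j then A else B := by
    intro i hi j hj
    rw [card_filter_powersetCard_superset (by simp [insert_subset_iff, hi, hj])]
    rcases eq_or_ne i j with rfl | hij
    · simp [A, hb]
    · simp [B, hij, card_pair hij]
  calc ∑ I ∈ s.powersetCard b, ‖∑ i ∈ I, u i‖ ^ 2
      = ∑ I ∈ s.powersetCard b, ∑ i ∈ I, ∑ j ∈ I, inner ℝ (u i) (u j) := by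
        simp_rw [← real_inner_self_eq_norm_sq, sum_inner, inner_sum]
    _ = ∑ i ∈ s, ∑ j ∈ s, (if i = j then A else B) * inner ℝ (u i) (u j) := by
        rw [sum_sum_sum_mem_eq_sum_sum_card_smul fun I hI => (mem_powersetCard.1 hI).1]
        refine sum_congr rfl fun i hi => sum_congr rfl fun j hj => ?_
        rw [nsmul_eq_mul, hcount i hi j hj]
    _ = (A - B) * ∑ i ∈ s, ‖u i‖ ^ 2 := by
        rw [sum_sum_ite_mul_inner, hu, norm_zero]; ring
    _ ≤ A * ∑ i ∈ s, ‖u i‖ ^ 2 := by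
        have hB : 0 ≤ B := by positivity
        gcongr
        exact sub_le_self A hB

end Finset

section Sampling

variable {E : Type*} [NormedAddCommGroup E] [InnerProductSpace ℝ E]

theorem expSub_norm_sq_inv_smul_sum_add_le {n b : ℕ} (hb : 1 ≤ b) (hbn : b ≤ n)
    (u : Fin n → E) (hu : ∑ i, u i = 0) (K : E) :
    expSub n b (fun I => ‖(b : ℝ)⁻¹ • ∑ i ∈ I, u i + K‖ ^ 2)
      ≤ ‖K‖ ^ 2 + ((b : ℝ) * n)⁻¹ * ∑ i, ‖u i‖ ^ 2 := by
  have hcross : ∑ I ∈ powersetCard b univ, inner ℝ ((b : ℝ)⁻¹ • ∑ i ∈ I, u i) K = 0 := by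
    rw [← sum_inner, ← smul_sum, sum_sum_mem_eq_sum_card_smul fun I _ => subset_univ I]
    simp_rw [card_filter_powersetCard_superset (subset_univ _), card_singleton, if_pos hb]
    rw [← smul_sum, hu, smul_zero, smul_zero, inner_zero_left]
  have hcount : (n : ℝ) * (n - 1).choose (b - 1) = b * n.choose b := by
    have h := Nat.add_one_mul_choose_eq (n - 1) (b - 1)
    rw [Nat.sub_add_cancel (hb.trans hbn), Nat.sub_add_cancel hb] at h
    rw [mul_comm (b : ℝ)]
    exact_mod_cast h
  have hn : (n : ℝ) ≠ 0 := Nat.cast_ne_zero.2 (by omega)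
  have hb0 : (b : ℝ) ≠ 0 := Nat.cast_ne_zero.2 (by omega)
  have hchoose : (0 : ℝ) < n.choose b := by exact_mod_cast Nat.choose_pos hbn
  calc expSub n b (fun I => ‖(b : ℝ)⁻¹ • ∑ i ∈ I, u i + K‖ ^ 2)
      = ((b : ℝ)⁻¹ ^ 2 * ∑ I ∈ powersetCard b univ, ‖∑ i ∈ I, u i‖ ^ 2
          + n.choose b * ‖K‖ ^ 2) / n.choose b := by
        simp_rw [expSub, norm_add_sq_real, sum_add_distrib, ← mul_sum, hcross, mul_zero, add_zero,
          sum_const, card_powersetCard, card_univ, Fintype.card_fin, nsmul_eq_mul, norm_smul,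
          mul_pow, norm_inv, Real.norm_natCast, ← mul_sum]
    _ ≤ ((b : ℝ)⁻¹ ^ 2 * ((n - 1).choose (b - 1) * ∑ i, ‖u i‖ ^ 2) + n.choose b * ‖K‖ ^ 2)
          / n.choose b := by
        gcongr
        simpa using sum_powersetCard_norm_sq_sum_le hb u hu
    _ = ‖K‖ ^ 2 + ((b : ℝ) * n)⁻¹ * ∑ i, ‖u i‖ ^ 2 := by
        field_simp
        linear_combination (∑ i, ‖u i‖ ^ 2) * hcount

theorem expSub_norm_sq_inv_smul_sum_sub_mean_add_le {n b : ℕ} (hb : 1 ≤ b) (hbn : b ≤ n)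
    (w : Fin n → E) (K : E) :
    expSub n b (fun I => ‖(b : ℝ)⁻¹ • ∑ i ∈ I, (w i - (n : ℝ)⁻¹ • ∑ j, w j) + K‖ ^ 2)
      ≤ ‖K‖ ^ 2 + ((b : ℝ) * n)⁻¹ * ∑ i, ‖w i‖ ^ 2 := by
  have hcenter := sum_sub_mean_eq_zero univ w
  have hvar := sum_norm_sub_mean_sq_le univ w
  rw [card_univ, Fintype.card_fin] at hcenter hvar
  calc _ ≤ ‖K‖ ^ 2 + ((b : ℝ) * n)⁻¹ * ∑ i, ‖w i - (n : ℝ)⁻¹ • ∑ j, w j‖ ^ 2 :=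
        expSub_norm_sq_inv_smul_sum_add_le hb hbn _ hcenter K
    _ ≤ ‖K‖ ^ 2 + ((b : ℝ) * n)⁻¹ * ∑ i, ‖w i‖ ^ 2 := by gcongr

theorem norm_add_smul_sq_le {a c : E} {r : ℝ} (ha : ‖a‖ ≤ r) (lam : ℝ) :
    ‖a + lam • c‖ ^ 2 ≤ 2 * r ^ 2 + 2 * lam ^ 2 * ‖c‖ ^ 2 :=
  calc ‖a + lam • c‖ ^ 2 ≤ (‖a‖ + ‖lam • c‖) ^ 2 := by gcongr; exact norm_add_le _ _
    _ ≤ 2 * (‖a‖ ^ 2 + ‖lam • c‖ ^ 2) := add_sq_le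
    _ ≤ 2 * (r ^ 2 + ‖lam • c‖ ^ 2) := by gcongr
    _ = 2 * r ^ 2 + 2 * lam ^ 2 * ‖c‖ ^ 2 := by
        rw [norm_smul, Real.norm_eq_abs, mul_pow, sq_abs]; ring

end Sampling

section ZeroSARAH

variable {d n : ℕ} (f : Fin n → EuclideanSpace ℝ (Fin d) → ℝ)

theorem gradient_avgF (hdiff : ∀ i, Differentiable ℝ (f i)) (z : EuclideanSpace ℝ (Fin d)) :
    gradient (avgF f) z = (n : ℝ)⁻¹ • ∑ i, gradient (f i) z := by
  have hz : ∀ i ∈ univ, DifferentiableAt ℝ (f i) z := fun i _ => (hdiff i).differentiableAt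
  unfold avgF gradient
  rw [fderiv_const_mul (DifferentiableAt.fun_sum hz), fderiv_fun_sum hz, map_smul, map_sum]

theorem zsEst_sub_gradient_avgF (hdiff : ∀ i, Differentiable ℝ (f i))
    (x x' v' : EuclideanSpace ℝ (Fin d)) (y : Fin n → EuclideanSpace ℝ (Fin d)) (lam : ℝ)
    {b : ℕ} (hb : b ≠ 0) {I : Finset (Fin n)} (hI : #I = b)
    (w : Fin n → EuclideanSpace ℝ (Fin d))
    (hw : ∀ i, w i = gradient (f i) x - gradient (f i) x' + lam • (gradient (f i) x' - y i)) :
    zsEst f x x' v' y lam b I - gradient (avgF f) x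
      = (b : ℝ)⁻¹ • ∑ i ∈ I, (w i - (n : ℝ)⁻¹ • ∑ j, w j)
        + (1 - lam) • (v' - gradient (avgF f) x') := by
  simp only [zsEst, hw, gradient_avgF f hdiff, smul_sub, smul_add, sum_add_distrib,
    sum_sub_distrib, ← smul_sum, sum_const, hI]
  rw [← Nat.cast_smul_eq_nsmul ℝ]
  have hb0 : (b : ℝ) ≠ 0 := Nat.cast_ne_zero.2 hb
  match_scalars <;> field_simp
  ring

end ZeroSARAH

theorem zerosarah_variance_bound_general {d n : ℕ}
    (L : ℝ)
    (f : Fin n → EuclideanSpace ℝ (Fin d) → ℝ)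
    (hdiff : ∀ i, Differentiable ℝ (f i))
    (hsmooth : ∀ i (x y : EuclideanSpace ℝ (Fin d)),
      ‖gradient (f i) x - gradient (f i) y‖ ≤ L * ‖x - y‖)
    (x x' v' : EuclideanSpace ℝ (Fin d)) (y : Fin n → EuclideanSpace ℝ (Fin d))
    (lam : ℝ) (b : ℕ) (hb1 : 1 ≤ b) (hbn : b ≤ n) :
    expSub n b (fun I => ‖zsEst f x x' v' y lam b I - gradient (avgF f) x‖ ^ 2)
      ≤ (1 - lam) ^ 2 * ‖v' - gradient (avgF f) x'‖ ^ 2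
        + 2 * L ^ 2 / (b : ℝ) * ‖x - x'‖ ^ 2
        + 2 * lam ^ 2 / (b : ℝ) *
            ((n : ℝ)⁻¹ * ∑ j, ‖gradient (f j) x' - y j‖ ^ 2) := by
  set w : Fin n → EuclideanSpace ℝ (Fin d) := fun i =>
    gradient (f i) x - gradient (f i) x' + lam • (gradient (f i) x' - y i)
  set K := (1 - lam) • (v' - gradient (avgF f) x')
  have hdecomp : ∀ I ∈ powersetCard b univ,
      zsEst f x x' v' y lam b I - gradient (avgF f) x
        = (b : ℝ)⁻¹ • ∑ i ∈ I, (w i - (n : ℝ)⁻¹ • ∑ j, w j) + K := fun I hI =>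
    zsEst_sub_gradient_avgF f hdiff x x' v' y lam (by omega) (mem_powersetCard.1 hI).2 w
      fun _ => rfl
  have hb0 : (b : ℝ) ≠ 0 := Nat.cast_ne_zero.2 (by omega)
  have hn0 : (n : ℝ) ≠ 0 := Nat.cast_ne_zero.2 (by omega)
  calc expSub n b (fun I => ‖zsEst f x x' v' y lam b I - gradient (avgF f) x‖ ^ 2)
      = expSub n b (fun I => ‖(b : ℝ)⁻¹ • ∑ i ∈ I, (w i - (n : ℝ)⁻¹ • ∑ j, w j) + K‖ ^ 2) := by
        rw [expSub, sum_congr rfl fun I hI => by rw [hdecomp I hI], expSub]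
    _ ≤ ‖K‖ ^ 2 + ((b : ℝ) * n)⁻¹ * ∑ i, ‖w i‖ ^ 2 :=
        expSub_norm_sq_inv_smul_sum_sub_mean_add_le hb1 hbn w K
    _ ≤ ‖K‖ ^ 2 + ((b : ℝ) * n)⁻¹ *
          ∑ i, (2 * (L * ‖x - x'‖) ^ 2 + 2 * lam ^ 2 * ‖gradient (f i) x' - y i‖ ^ 2) := by
        gcongr with i
        exact norm_add_smul_sq_le (hsmooth i x x') lam
    _ = _ := by
        rw [norm_smul, mul_pow, Real.norm_eq_abs, sq_abs, sum_add_distrib, sum_const, card_univ,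
          Fintype.card_fin, nsmul_eq_mul, ← mul_sum]
        field_simp
        ring

/-- Lemma 2 (variance bound for the ZeroSARAH estimator). -/
theorem zerosarah_variance_bound {d n : ℕ} (hd : 1 ≤ d) (hn : 1 ≤ n)
    (L : ℝ) (hL : 0 < L)
    (f : Fin n → EuclideanSpace ℝ (Fin d) → ℝ)
    (hdiff : ∀ i, Differentiable ℝ (f i))
    (hsmooth : ∀ i (x y : EuclideanSpace ℝ (Fin d)),
      ‖gradient (f i) x - gradient (f i) y‖ ≤ L * ‖x - y‖)
    (x x' v' : EuclideanSpace ℝ (Fin d)) (y : Fin n → EuclideanSpace ℝ (Fin d))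
    (lam : ℝ) (b : ℕ) (hb1 : 1 ≤ b) (hbn : b ≤ n) :
    expSub n b (fun I => ‖zsEst f x x' v' y lam b I - gradient (avgF f) x‖ ^ 2)
      ≤ (1 - lam) ^ 2 * ‖v' - gradient (avgF f) x'‖ ^ 2
        + 2 * L ^ 2 / (b : ℝ) * ‖x - x'‖ ^ 2
        + 2 * lam ^ 2 / (b : ℝ) *
            ((n : ℝ)⁻¹ * ∑ j, ‖gradient (f j) x' - y j‖ ^ 2) :=
  zerosarah_variance_bound_general L f hdiff hsmooth x x' v' y lam b hb1 hbn
end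
end

section
/- Fix x, x' ∈ ℝ^d, y_1, …, y_n ∈ ℝ^d, 1 ≤ b ≤ n and β > 0. For a subset I ⊆ {1,…,n}, define y_j⁺(I) := ∇f_j(x) if j ∈ I and y_j⁺(I) := y_j if j ∉ I. Then E_I[(1/n) ∑_{j=1}^n ‖∇f_j(x) − y_j⁺(I)‖²] ≤ (1 − b/n)(1 + β) · (1/n) ∑_{j=1}^n ‖∇f_j(x') − y_j‖² + (1 − b/n)(1 + 1/β) · L² ‖x − x'‖². -/
/-!
Refreshing the memories indexed by the minibatch `I` zeroes their errors, and every index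
avoids a uniform `b`-subset with probability `C(n-1, b) / C(n, b) = 1 - b/n`; so the expected
error is `1 - b/n` times the mean of `‖∇fⱼ(x) - yⱼ‖²`. Each of these terms is compared with
`‖∇fⱼ(x') - yⱼ‖²` through `‖u + v‖² ≤ (1 + β)‖u‖² + (1 + 1/β)‖v‖²` and `L`-smoothness.
-/

noncomputable section

open Finset

theorem add_sq_le_one_add_mul_sq {β : ℝ} (hβ : 0 < β) (s t : ℝ) :
    (s + t) ^ 2 ≤ (1 + β) * s ^ 2 + (1 + 1 / β) * t ^ 2 := by
  have key : β * ((1 + β) * s ^ 2 + (1 + 1 / β) * t ^ 2 - (s + t) ^ 2) = (β * s - t) ^ 2 := by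
    field_simp; ring
  nlinarith [sq_nonneg (β * s - t)]

theorem norm_sub_sq_le_of_norm_sub_le {E : Type*} [SeminormedAddCommGroup E] {β L r : ℝ}
    (hβ : 0 < β) {u v : E} (w : E) (huv : ‖u - v‖ ≤ L * r) :
    ‖u - w‖ ^ 2 ≤ (1 + β) * ‖v - w‖ ^ 2 + (1 + 1 / β) * L ^ 2 * r ^ 2 := by
  calc ‖u - w‖ ^ 2 ≤ (‖v - w‖ + ‖u - v‖) ^ 2 := by
        gcongr
        simpa [add_comm] using norm_sub_le_norm_sub_add_norm_sub u v w
    _ ≤ (1 + β) * ‖v - w‖ ^ 2 + (1 + 1 / β) * ‖u - v‖ ^ 2 := add_sq_le_one_add_mul_sq hβ _ _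
    _ ≤ (1 + β) * ‖v - w‖ ^ 2 + (1 + 1 / β) * (L * r) ^ 2 := by gcongr
    _ = _ := by ring

theorem inv_mul_sum_le_mul_inv_mul_sum_add {n : ℕ} {c a : Fin n → ℝ} {μ K : ℝ} (hK : 0 ≤ K)
    (h : ∀ j, c j ≤ μ * a j + K) :
    (n : ℝ)⁻¹ * ∑ j, c j ≤ μ * ((n : ℝ)⁻¹ * ∑ j, a j) + K := by
  calc (n : ℝ)⁻¹ * ∑ j, c j ≤ (n : ℝ)⁻¹ * ∑ j, (μ * a j + K) := by gcongr with j; exact h j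
    _ = μ * ((n : ℝ)⁻¹ * ∑ j, a j) + (n : ℝ)⁻¹ * n * K := by
      rw [sum_add_distrib, ← mul_sum, sum_const, card_univ, Fintype.card_fin, nsmul_eq_mul]
      ring
    _ ≤ _ := by gcongr; exact mul_le_of_le_one_left hK inv_mul_le_one

theorem card_filter_not_mem_powersetCard {α : Type*} [Fintype α] [DecidableEq α] (b : ℕ) (j : α) :
    #{I ∈ powersetCard b (univ : Finset α) | j ∉ I} = (Fintype.card α - 1).choose b := by
  have : {I ∈ powersetCard b (univ : Finset α) | j ∉ I} = powersetCard b (univ.erase j) := by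
    ext I
    simp only [mem_filter, mem_powersetCard, subset_erase, subset_univ, true_and]
    tauto
  rw [this, card_powersetCard, card_erase_of_mem (mem_univ j), card_univ]

theorem Nat.cast_choose_pred {n : ℕ} (hn : 0 < n) (b : ℕ) :
    ((n - 1).choose b : ℝ) = (1 - b / n) * n.choose b := by
  obtain ⟨m, rfl⟩ := Nat.exists_eq_add_one_of_ne_zero hn.ne'
  rw [Nat.add_sub_cancel]
  rcases le_or_gt b (m + 1) with hb | hb
  · have h := congrArg (Nat.cast (R := ℝ)) (Nat.choose_mul_succ_eq m b)
    push_cast [Nat.cast_sub hb] at h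
    push_cast
    field_simp
    linarith
  · simp [Nat.choose_eq_zero_of_lt hb, Nat.choose_eq_zero_of_lt (by omega : m < b)]

theorem expSub_sum_compl {n b : ℕ} (hbn : b ≤ n) (c : Fin n → ℝ) :
    expSub n b (fun I => ∑ j ∈ Iᶜ, c j) = (1 - b / n) * ∑ j, c j := by
  have hcount (j : Fin n) : ∑ I ∈ powersetCard b univ, (if j ∉ I then c j else 0)
      = (1 - b / n) * n.choose b * c j := by
    rw [← sum_filter, sum_const, nsmul_eq_mul, card_filter_not_mem_powersetCard,
      Fintype.card_fin, Nat.cast_choose_pred (Fin.pos j)]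
  have hswap : ∑ I ∈ powersetCard b univ, ∑ j ∈ Iᶜ, c j
      = ∑ j, ∑ I ∈ powersetCard b univ, (if j ∉ I then c j else 0) := by
    rw [sum_comm]
    simp only [← mem_compl, ← sum_filter, filter_mem_eq_inter, univ_inter]
  have hchoose : (0 : ℝ) < n.choose b := by exact_mod_cast Nat.choose_pos hbn
  rw [expSub, hswap, card_powersetCard, card_univ, Fintype.card_fin]
  simp_rw [hcount, ← mul_sum]
  field_simp

theorem sum_sq_norm_sub_ite_eq_sum_compl {E : Type*} [SeminormedAddCommGroup E] {n : ℕ}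
    (I : Finset (Fin n)) (u y : Fin n → E) :
    ∑ j, ‖u j - (if j ∈ I then u j else y j)‖ ^ 2 = ∑ j ∈ Iᶜ, ‖u j - y j‖ ^ 2 := by
  have hI : ∑ j ∈ I, ‖u j - (if j ∈ I then u j else y j)‖ ^ 2 = 0 :=
    sum_eq_zero fun j hj => by simp [hj]
  rw [← sum_compl_add_sum I, hI, add_zero]
  exact sum_congr rfl fun j hj => by rw [if_neg (mem_compl.1 hj)]

theorem zerosarah_tracking_bound_general {d n : ℕ}
    (L : ℝ)
    (f : Fin n → EuclideanSpace ℝ (Fin d) → ℝ)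
    (hsmooth : ∀ i (x y : EuclideanSpace ℝ (Fin d)),
      ‖gradient (f i) x - gradient (f i) y‖ ≤ L * ‖x - y‖)
    (x x' : EuclideanSpace ℝ (Fin d)) (y : Fin n → EuclideanSpace ℝ (Fin d))
    (b : ℕ) (hbn : b ≤ n) (β : ℝ) (hβ : 0 < β) :
    expSub n b (fun I => (n : ℝ)⁻¹ *
        ∑ j, ‖gradient (f j) x - (if j ∈ I then gradient (f j) x else y j)‖ ^ 2)
      ≤ (1 - (b : ℝ) / n) * (1 + β) *
          ((n : ℝ)⁻¹ * ∑ j, ‖gradient (f j) x' - y j‖ ^ 2)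
        + (1 - (b : ℝ) / n) * (1 + 1 / β) * L ^ 2 * ‖x - x'‖ ^ 2 := by
  have hmean := inv_mul_sum_le_mul_inv_mul_sum_add
    (a := fun j => ‖gradient (f j) x' - y j‖ ^ 2) (by positivity)
    fun j => norm_sub_sq_le_of_norm_sub_le hβ (y j) (hsmooth j x x')
  have hexp : expSub n b (fun I => (n : ℝ)⁻¹ *
        ∑ j, ‖gradient (f j) x - (if j ∈ I then gradient (f j) x else y j)‖ ^ 2)
      = (1 - (b : ℝ) / n) * ((n : ℝ)⁻¹ * ∑ j, ‖gradient (f j) x - y j‖ ^ 2) := by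
    simp_rw [sum_sq_norm_sub_ite_eq_sum_compl, mul_sum]
    rw [expSub_sum_compl hbn, mul_sum]
  have hb : 0 ≤ 1 - (b : ℝ) / n :=
    sub_nonneg.2 (div_le_one_of_le₀ (by exact_mod_cast hbn) n.cast_nonneg)
  rw [hexp]
  calc _ ≤ (1 - (b : ℝ) / n) * ((1 + β) * ((n : ℝ)⁻¹ * ∑ j, ‖gradient (f j) x' - y j‖ ^ 2)
          + (1 + 1 / β) * L ^ 2 * ‖x - x'‖ ^ 2) := by gcongr
    _ = _ := by ring

/-- Lemma 3 (tracking error recursion for the `yⱼ` memory vectors). -/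
theorem zerosarah_tracking_bound {d n : ℕ} (hd : 1 ≤ d) (hn : 1 ≤ n)
    (L : ℝ) (hL : 0 < L)
    (f : Fin n → EuclideanSpace ℝ (Fin d) → ℝ)
    (hdiff : ∀ i, Differentiable ℝ (f i))
    (hsmooth : ∀ i (x y : EuclideanSpace ℝ (Fin d)),
      ‖gradient (f i) x - gradient (f i) y‖ ≤ L * ‖x - y‖)
    (x x' : EuclideanSpace ℝ (Fin d)) (y : Fin n → EuclideanSpace ℝ (Fin d))
    (b : ℕ) (hb1 : 1 ≤ b) (hbn : b ≤ n) (β : ℝ) (hβ : 0 < β) :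
    expSub n b (fun I => (n : ℝ)⁻¹ *
        ∑ j, ‖gradient (f j) x - (if j ∈ I then gradient (f j) x else y j)‖ ^ 2)
      ≤ (1 - (b : ℝ) / n) * (1 + β) *
          ((n : ℝ)⁻¹ * ∑ j, ‖gradient (f j) x' - y j‖ ^ 2)
        + (1 - (b : ℝ) / n) * (1 + 1 / β) * L ^ 2 * ‖x - x'‖ ^ 2 :=
  zerosarah_tracking_bound_general L f hsmooth x x' y b hbn β hβ
end
end
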